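/- arXiv:1502.01144 — 7 statements merged into one kernel-verified Lean document; each statement's English description precedes it below -/
import Mathlib

section
/- Let N = [[0, 1, 0], [-3, 0, 5], [-4, 0, 6]] be a real 3×3 matrix and v₀ = (0, 0, 1)ᵗ. Then the sequence n ↦ |(Nⁿ·v₀)₃|^{1/n}, where (Nⁿ·v₀)₃ denotes the third coordinate of Nⁿ·v₀, converges to (5 + √33)/2 as n → ∞. -/
/-!
`N` has the eigenvalues `1` and `l, m = (5 ± √33)/2`, the roots of `x² = 5x + 2`, with
eigenvectors `(5, 5r, r² + 3)`. Expanding `(0, 0, 1)` in this eigenbasis gives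
`(Nⁿ·v₀)₃ = A·lⁿ + B·mⁿ - 2/3` with `A > 0`; as `|m| < l` and `1 < l`, the quotient by `lⁿ`
tends to `A ≠ 0`, so the `n`-th root of the absolute value tends to `l`.
-/

open Filter Matrix Topology

theorem Matrix.pow_mulVec_of_mulVec_eq_smul {ι R : Type*} [Fintype ι] [DecidableEq ι]
    [CommSemiring R] {M : Matrix ι ι R} {v : ι → R} {r : R} (h : M *ᵥ v = r • v) (k : ℕ) :
    (M ^ k) *ᵥ v = r ^ k • v := by
  induction k with
  | zero => simp
  | succ k ih => rw [pow_succ', ← mulVec_mulVec, ih, mulVec_smul, h, smul_smul, pow_succ]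

theorem tendsto_abs_rpow_one_div_of_tendsto_div_pow {u : ℕ → ℝ} {r A : ℝ} (hr : 0 < r)
    (hA : A ≠ 0) (h : Tendsto (fun n => u n / r ^ n) atTop (𝓝 A)) :
    Tendsto (fun n : ℕ => |u n| ^ ((1 : ℝ) / n)) atTop (𝓝 r) := by
  have hroot : Tendsto (fun n : ℕ => |u n / r ^ n| ^ ((1 : ℝ) / n)) atTop (𝓝 1) := by
    simpa using h.abs.rpow tendsto_one_div_atTop_nhds_zero_nat (Or.inl (abs_ne_zero.2 hA))
  have hlim := hroot.const_mul r
  rw [mul_one] at hlim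
  refine hlim.congr' ?_
  filter_upwards [eventually_ne_atTop 0] with n hn
  have hrn : 0 < r ^ n := pow_pos hr n
  rw [abs_div, abs_of_pos hrn, Real.div_rpow (abs_nonneg _) hrn.le, ← Real.rpow_natCast,
    ← Real.rpow_mul hr.le, mul_one_div_cancel (Nat.cast_ne_zero.2 hn), Real.rpow_one,
    mul_div_cancel₀ _ hr.ne']

theorem tendsto_linear_combination_pow_div_pow {A B C r s : ℝ} (hr : 1 < r) (hs : |s| < r) :
    Tendsto (fun n : ℕ => (A * r ^ n + B * s ^ n + C) / r ^ n) atTop (𝓝 A) := by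
  have hr0 : 0 < r := by linarith
  have hsr : Tendsto (fun n : ℕ => (s / r) ^ n) atTop (𝓝 0) :=
    tendsto_pow_atTop_nhds_zero_of_abs_lt_one (by rwa [abs_div, abs_of_pos hr0, div_lt_one hr0])
  have hr1 : Tendsto (fun n : ℕ => (1 / r) ^ n) atTop (𝓝 0) :=
    tendsto_pow_atTop_nhds_zero_of_abs_lt_one
      (by rwa [abs_of_pos (by positivity), div_lt_one hr0])
  have hlim := ((hsr.const_mul B).const_add A).add (hr1.const_mul C)
  simp only [mul_zero, add_zero] at hlim
  refine hlim.congr fun n => ?_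
  have : r ^ n ≠ 0 := pow_ne_zero n hr0.ne'
  simp only [div_pow, one_pow]
  field_simp

def degMatrix : Matrix (Fin 3) (Fin 3) ℝ := !![0, 1, 0; -3, 0, 5; -4, 0, 6]

def degMatrixEigvec (r : ℝ) : Fin 3 → ℝ := ![5, 5 * r, r ^ 2 + 3]

/-- The cubic is the characteristic polynomial `(x - 1)(x² - 5x - 2)` of `degMatrix`. -/
theorem degMatrix_mulVec_eigvec {r : ℝ} (hr : r ^ 3 - 6 * r ^ 2 + 3 * r + 2 = 0) :
    degMatrix *ᵥ degMatrixEigvec r = r • degMatrixEigvec r := by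
  ext i
  fin_cases i <;> simp only [degMatrix, degMatrixEigvec, mulVec, dotProduct, Fin.sum_univ_three,
    of_apply, Fin.zero_eta, Fin.mk_one, Fin.reduceFinMk, Fin.isValue, cons_val', cons_val_fin_one,
    cons_val, cons_val_zero, cons_val_one, Pi.smul_apply, smul_eq_mul]
  · ring
  · ring
  · linear_combination -hr

theorem unitVec_two_eq_sum_smul_degMatrixEigvec {l m : ℝ} (hl : l ^ 2 = 5 * l + 2)
    (hm : m ^ 2 = 5 * m + 2) (hlm : l ≠ m) :
    ![0, 0, 1] = ((1 - m) / (6 * (l - m))) • degMatrixEigvec l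
      + ((l - 1) / (6 * (l - m))) • degMatrixEigvec m + (-1 / 6 : ℝ) • degMatrixEigvec 1 := by
  have : l - m ≠ 0 := sub_ne_zero.2 hlm
  ext i
  fin_cases i <;> simp only [degMatrixEigvec, Fin.zero_eta, Fin.mk_one, Fin.reduceFinMk,
    Fin.isValue, cons_val, cons_val_zero, cons_val_one, smul_cons, smul_eq_mul, smul_empty,
    add_cons, head_cons, tail_cons, empty_add_empty, mul_one, one_pow, Pi.add_apply] <;>
    field_simp
  · ring
  · ring
  · linear_combination (m - 1) * hl + (1 - l) * hm

theorem degMatrix_pow_mulVec_apply_two {l m : ℝ} (hl : l ^ 2 = 5 * l + 2)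
    (hm : m ^ 2 = 5 * m + 2) (hlm : l ≠ m) (n : ℕ) :
    (degMatrix ^ n *ᵥ ![0, 0, 1]) 2 = (1 - m) * (l ^ 2 + 3) / (6 * (l - m)) * l ^ n
      + (l - 1) * (m ^ 2 + 3) / (6 * (l - m)) * m ^ n + (-2 / 3) := by
  have hχ : ∀ r : ℝ, r ^ 2 = 5 * r + 2 → r ^ 3 - 6 * r ^ 2 + 3 * r + 2 = 0 := fun r hr => by
    linear_combination (r - 1) * hr
  rw [unitVec_two_eq_sum_smul_degMatrixEigvec hl hm hlm]
  simp only [mulVec_add, mulVec_smul,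
    pow_mulVec_of_mulVec_eq_smul (degMatrix_mulVec_eigvec (hχ l hl)),
    pow_mulVec_of_mulVec_eq_smul (degMatrix_mulVec_eigvec (hχ m hm)),
    pow_mulVec_of_mulVec_eq_smul (degMatrix_mulVec_eigvec (r := 1) (by norm_num))]
  simp only [degMatrixEigvec, smul_cons, smul_eq_mul, smul_empty, add_cons, head_cons, tail_cons,
    empty_add_empty, one_pow, mul_one, one_smul, Fin.isValue, Pi.add_apply, cons_val]
  ring

/-- The exponential growth rate of the third coordinate of `Nⁿ·(0,0,1)ᵗ` for
`N = [[0,1,0],[-3,0,5],[-4,0,6]]` is the dominant eigenvalue `(5 + √33)/2`. -/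
theorem stmt_6 (N : Matrix (Fin 3) (Fin 3) ℝ)
    (hN : N = !![0, 1, 0; -3, 0, 5; -4, 0, 6])
    (v0 : Fin 3 → ℝ) (hv0 : v0 = ![0, 0, 1]) :
    Tendsto (fun n : ℕ => |((N ^ n).mulVec v0) 2| ^ ((1 : ℝ) / n))
      atTop (nhds ((5 + Real.sqrt 33) / 2)) := by
  obtain rfl : N = degMatrix := hN
  subst hv0
  set l : ℝ := (5 + √33) / 2 with hl_def
  set m : ℝ := (5 - √33) / 2 with hm_def
  have h33 : √33 ^ 2 = 33 := Real.sq_sqrt (by norm_num)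
  have h33_gt : 5 < √33 := (Real.lt_sqrt (by norm_num)).2 (by norm_num)
  have hl : l ^ 2 = 5 * l + 2 := by linear_combination h33 / 4
  have hm : m ^ 2 = 5 * m + 2 := by linear_combination h33 / 4
  have hm1 : m < 1 := by linarith
  have hl1 : 1 < l := by linarith
  have hml : |m| < l := abs_lt.2 ⟨by linarith, by linarith⟩
  have hA : 0 < (1 - m) * (l ^ 2 + 3) / (6 * (l - m)) :=
    div_pos (mul_pos (by linarith) (by positivity)) (by linarith)
  refine tendsto_abs_rpow_one_div_of_tendsto_div_pow (by linarith) hA.ne' ?_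
  simp_rw [degMatrix_pow_mulVec_apply_two hl hm (by linarith)]
  exact tendsto_linear_combination_pow_div_pow hl1 hml
end

section
/- Let P₀ = [[2,0,0,-1,-1,0],[1,1,0,-1,-1,0],[1,0,1,-1,-1,0],[1,0,0,0,-1,0],[1,0,0,-1,0,0],[0,0,0,0,0,0]], P₁ = [[1,1,0,-1,0,-1],[0,2,0,-1,0,-1],[0,1,1,-1,0,-1],[0,1,0,0,0,-1],[0,0,0,0,0,0],[0,1,0,-1,0,0]], P₂ = [[1,0,1,0,-1,-1],[0,1,1,0,-1,-1],[0,0,2,0,-1,-1],[0,0,0,0,0,0],[0,0,1,0,0,-1],[0,0,1,0,-1,0]] be 6×6 integer matrices, with rows and columns indexed by 0, …, 5. For each j ∈ {0, 1, 2}: if d ∈ ℤ⁶ satisfies d_k ≥ d_l for all k ∈ {0, 1, 2} and all l ∈ {3, 4, 5}, then the vector d' = P_j·d also satisfies d'_k ≥ d'_l for all k ∈ {0, 1, 2} and all l ∈ {3, 4, 5}. -/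
/-!
Writing `a, b` for the two indices of `{3, 4, 5}` other than `5 - j`, the matrix `P j` adds the
constant `d j - d a - d b` to every coordinate of `d` except coordinate `5 - j`, which it sets to
`0`. Hence for `d' = P j *ᵥ d` every difference `d' k - d' l` is unchanged unless `l = 5 - j`, and then
`d' k = (d j - d a) + (d k - d b) ≥ 0`.
-/

def P0 : Matrix (Fin 6) (Fin 6) ℤ :=
  !![2, 0, 0, -1, -1, 0;
     1, 1, 0, -1, -1, 0;
     1, 0, 1, -1, -1, 0;
     1, 0, 0,  0, -1, 0;
     1, 0, 0, -1,  0, 0;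
     0, 0, 0,  0,  0, 0]

def P1 : Matrix (Fin 6) (Fin 6) ℤ :=
  !![1, 1, 0, -1, 0, -1;
     0, 2, 0, -1, 0, -1;
     0, 1, 1, -1, 0, -1;
     0, 1, 0,  0, 0, -1;
     0, 0, 0,  0, 0,  0;
     0, 1, 0, -1, 0,  0]

def P2 : Matrix (Fin 6) (Fin 6) ℤ :=
  !![1, 0, 1, 0, -1, -1;
     0, 1, 1, 0, -1, -1;
     0, 0, 2, 0, -1, -1;
     0, 0, 0, 0,  0,  0;
     0, 0, 1, 0,  0, -1;
     0, 0, 1, 0, -1,  0]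

lemma Function.update_add_const_apply_le {ι α : Type*} [DecidableEq ι] [AddCommGroup α]
    [PartialOrder α] [IsOrderedAddMonoid α] {d : ι → α} {c : α} {m k l : ι} (hkm : k ≠ m)
    (hlk : d l ≤ d k) (hk : 0 ≤ d k + c) :
    Function.update (fun i => d i + c) m 0 l ≤ Function.update (fun i => d i + c) m 0 k := by
  rw [Function.update_of_ne hkm]
  by_cases hlm : l = m
  · subst hlm
    simpa using hk
  · rw [Function.update_of_ne hlm]
    exact add_le_add_left hlk c

lemma mulVec_transition_eq_update (j : Fin 3) (d : Fin 6 → ℤ) :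
    (![P0, P1, P2] j).mulVec d =
      Function.update
        (fun i => d i + (d (Fin.castAdd 3 j) + d (Fin.natAdd 3 j.rev) - (d 3 + d 4 + d 5)))
        (Fin.natAdd 3 j.rev) 0 := by
  funext i
  fin_cases j <;> fin_cases i <;>
    simp [P0, P1, P2, Matrix.mulVec, dotProduct, Fin.sum_univ_six, Function.update] <;> ring

lemma add_transition_shift_nonneg {d : Fin 6 → ℤ}
    (hd : ∀ k l : Fin 6, (k : ℕ) < 3 → 3 ≤ (l : ℕ) → d l ≤ d k) (j : Fin 3) {k : Fin 6}
    (hk : (k : ℕ) < 3) :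
    0 ≤ d k + (d (Fin.castAdd 3 j) + d (Fin.natAdd 3 j.rev) - (d 3 + d 4 + d 5)) := by
  have hj : ((Fin.castAdd 3 j : Fin 6) : ℕ) < 3 := j.isLt
  have := hd k 3 hk le_rfl
  have := hd k 4 hk (by decide)
  have := hd k 5 hk (by decide)
  have := hd _ 3 hj le_rfl
  have := hd _ 4 hj (by decide)
  have := hd _ 5 hj (by decide)
  fin_cases j <;>
    simp only [Fin.zero_eta, Fin.mk_one, Fin.reduceFinMk, Fin.reduceCastAdd, Fin.reduceRev,
      Fin.natAdd_eq_addNat, Fin.reduceAddNat] at * <;>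
    linarith

/-- Each of the transition matrices `P₀, P₁, P₂` preserves the cone of integer vectors whose
first three coordinates dominate the last three (induction step of Lemma 7.1). -/
theorem stmt_7 (P : Fin 3 → Matrix (Fin 6) (Fin 6) ℤ) (hP : P = ![P0, P1, P2]) :
    ∀ (j : Fin 3) (d : Fin 6 → ℤ),
      (∀ k l : Fin 6, (k : ℕ) < 3 → 3 ≤ (l : ℕ) → d l ≤ d k) →
      ∀ k l : Fin 6, (k : ℕ) < 3 → 3 ≤ (l : ℕ) →
        (P j).mulVec d l ≤ (P j).mulVec d k := by
  subst hP
  intro j d hd k l hk hl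
  rw [mulVec_transition_eq_update]
  refine Function.update_add_const_apply_le (Fin.ne_of_val_ne ?_) (hd k l hk hl)
    (add_transition_shift_nonneg hd j hk)
  simp only [Fin.val_natAdd, Fin.val_rev]
  omega
end

section
/- Let P₀ = [[2,0,0,-1,-1,0],[1,1,0,-1,-1,0],[1,0,1,-1,-1,0],[1,0,0,0,-1,0],[1,0,0,-1,0,0],[0,0,0,0,0,0]], P₁ = [[1,1,0,-1,0,-1],[0,2,0,-1,0,-1],[0,1,1,-1,0,-1],[0,1,0,0,0,-1],[0,0,0,0,0,0],[0,1,0,-1,0,0]], P₂ = [[1,0,1,0,-1,-1],[0,1,1,0,-1,-1],[0,0,2,0,-1,-1],[0,0,0,0,0,0],[0,0,1,0,0,-1],[0,0,1,0,-1,0]] be 6×6 integer matrices with rows and columns indexed by 0, …, 5, and extend the indexing cyclically by P_n := P_j for n ≡ j (mod 3). Define v⁽⁰⁾ = (1,0,0,0,0,0)ᵗ ∈ ℤ⁶ and v⁽ⁱ⁺¹⁾ = P_i·v⁽ⁱ⁾ for i ≥ 0. Then for every i ≥ 0, each of the coordinates v⁽ⁱ⁾₀, v⁽ⁱ⁾₁,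 v⁽ⁱ⁾₂ is greater than or equal to each of the coordinates v⁽ⁱ⁾₃, v⁽ⁱ⁾₄, v⁽ⁱ⁾₅. -/
/-- Cyclic extension `P_n := P_{n mod 3}` of the three transition matrices. -/
def Pseq (n : ℕ) : Matrix (Fin 6) (Fin 6) ℤ := ![P0, P1, P2] (⟨n % 3, Nat.mod_lt _ (by norm_num)⟩ : Fin 3)

/-!
The orbit satisfies an exact invariant depending only on the phase `i mod 3`: coordinates 1 and 2
equal `v₀ - 1`, and among coordinates 3, 4, 5 one vanishes while the other two are nonnegative
with sum `v₀ - 1` or `v₀`. The matrix `Pⱼ` carries the invariant of phase `j` to that of phase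
`j + 1`, and each phase invariant bounds coordinates 3, 4, 5 by `v₀ - 1`.
-/

open Matrix

lemma Pseq_three_mul (m : ℕ) : Pseq (3 * m) = P0 := by
  simp [Pseq]

lemma Pseq_three_mul_add_one (m : ℕ) : Pseq (3 * m + 1) = P1 := by
  simp [Pseq, Nat.add_mod]

lemma Pseq_three_mul_add_two (m : ℕ) : Pseq (3 * m + 2) = P2 := by
  simp [Pseq, Nat.add_mod]

def TailLeHead (w : Fin 6 → ℤ) : Prop :=
  ∀ k l : Fin 6, (k : ℕ) < 3 → 3 ≤ (l : ℕ) → w l ≤ w k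

lemma tailLeHead_of_le {w : Fin 6 → ℤ} (h1 : w 1 = w 0 - 1) (h2 : w 2 = w 0 - 1)
    (h3 : w 3 ≤ w 0 - 1) (h4 : w 4 ≤ w 0 - 1) (h5 : w 5 ≤ w 0 - 1) : TailLeHead w := by
  intro k l hk hl
  fin_cases k <;> fin_cases l <;> simp_all <;> omega

def Phase0 (w : Fin 6 → ℤ) : Prop :=
  w 1 = w 0 - 1 ∧ w 2 = w 0 - 1 ∧ w 3 = 0 ∧ 0 ≤ w 4 ∧ 0 ≤ w 5 ∧ w 4 + w 5 = w 0 - 1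

def Phase1 (w : Fin 6 → ℤ) : Prop :=
  w 1 = w 0 - 1 ∧ w 2 = w 0 - 1 ∧ w 5 = 0 ∧ 1 ≤ w 3 ∧ 1 ≤ w 4 ∧ w 3 + w 4 = w 0

def Phase2 (w : Fin 6 → ℤ) : Prop :=
  w 1 = w 0 - 1 ∧ w 2 = w 0 - 1 ∧ w 4 = 0 ∧ 1 ≤ w 3 ∧ 0 ≤ w 5 ∧ w 3 + w 5 = w 0 - 1

lemma Phase0.P0_mulVec {w : Fin 6 → ℤ} (h : Phase0 w) : Phase1 (P0 *ᵥ w) := by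
  obtain ⟨h1, h2, h3, h4, h5, h6⟩ := h
  simp [Phase1, P0, mulVec, dotProduct, Fin.sum_univ_succ]
  omega

lemma Phase1.P1_mulVec {w : Fin 6 → ℤ} (h : Phase1 w) : Phase2 (P1 *ᵥ w) := by
  obtain ⟨h1, h2, h3, h4, h5, h6⟩ := h
  simp [Phase2, P1, mulVec, dotProduct, Fin.sum_univ_succ]
  omega

lemma Phase2.P2_mulVec {w : Fin 6 → ℤ} (h : Phase2 w) : Phase0 (P2 *ᵥ w) := by
  obtain ⟨h1, h2, h3, h4, h5, h6⟩ := h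
  simp [Phase0, P2, mulVec, dotProduct, Fin.sum_univ_succ]
  omega

lemma Phase0.tailLeHead {w : Fin 6 → ℤ} (h : Phase0 w) : TailLeHead w := by
  obtain ⟨h1, h2, h3, h4, h5, h6⟩ := h
  exact tailLeHead_of_le h1 h2 (by omega) (by omega) (by omega)

lemma Phase1.tailLeHead {w : Fin 6 → ℤ} (h : Phase1 w) : TailLeHead w := by
  obtain ⟨h1, h2, h3, h4, h5, h6⟩ := h
  exact tailLeHead_of_le h1 h2 (by omega) (by omega) (by omega)

lemma Phase2.tailLeHead {w : Fin 6 → ℤ} (h : Phase2 w) : TailLeHead w := by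
  obtain ⟨h1, h2, h3, h4, h5, h6⟩ := h
  exact tailLeHead_of_le h1 h2 (by omega) (by omega) (by omega)

/-- Along the orbit of `e₀ = (1,0,…,0)ᵗ` under `v⁽ⁱ⁺¹⁾ = P_i·v⁽ⁱ⁾`, each of the first three
coordinates is always at least each of the last three (Lemma 7.1, key inequality). -/
theorem stmt_8 (v : ℕ → Fin 6 → ℤ)
    (hv0 : v 0 = fun i => if i = 0 then 1 else 0)
    (hv : ∀ i : ℕ, v (i + 1) = (Pseq i).mulVec (v i)) :
    ∀ (i : ℕ) (k l : Fin 6), (k : ℕ) < 3 → 3 ≤ (l : ℕ) → v i l ≤ v i k := by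
  have phase0 : ∀ m, Phase0 (v (3 * m)) := by
    intro m
    induction m with
    | zero => simp [hv0, Phase0]
    | succ m ih =>
      rw [show 3 * (m + 1) = 3 * m + 2 + 1 by ring, hv, hv, hv, Pseq_three_mul,
        Pseq_three_mul_add_one, Pseq_three_mul_add_two]
      exact ih.P0_mulVec.P1_mulVec.P2_mulVec
  have phase1 (m : ℕ) : Phase1 (v (3 * m + 1)) := by
    rw [hv, Pseq_three_mul]
    exact (phase0 m).P0_mulVec
  have phase2 (m : ℕ) : Phase2 (v (3 * m + 2)) := by
    rw [hv, Pseq_three_mul_add_one]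
    exact (phase1 m).P1_mulVec
  intro i
  rw [← Nat.div_add_mod i 3]
  have hr : i % 3 < 3 := Nat.mod_lt i (by norm_num)
  interval_cases i % 3
  · exact (phase0 _).tailLeHead
  · exact (phase1 _).tailLeHead
  · exact (phase2 _).tailLeHead
end

section
/- Let P = [[3,1,1,-3,-2,0],[2,2,1,-3,-2,0],[2,1,2,-3,-2,0],[0,0,0,0,0,0],[1,0,1,-1,-1,0],[1,1,1,-2,-1,0]] viewed as a real 6×6 matrix. Then 2 + √5 = ((1 + √5)/2)³ is an eigenvalue of P, and every complex eigenvalue μ of P satisfies |μ| ≤ 2 + √5. -/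
open Matrix Polynomial Real
open scoped goldenRatio

/-!
With `φ` the golden ratio and `ψ = 1 - φ` its conjugate, `φ³ = 2 + √5` and the vector
`(φ, φ, φ, 0, φ - 1, 1)` is an eigenvector of `P` for `φ³`, by `φ² = φ + 1` alone.
Conversely `P` is annihilated by its characteristic polynomial `X²(X - 1)²(X² - 4X - 1)`, an
integer matrix identity checked by evaluation; the roots of the last factor are `φ³` and
`ψ³ = 2 - √5`, and `|ψ| < 1`, so every eigenvalue has modulus at most `φ³`.
-/

theorem spectrum.eval_eq_zero_of_aeval_eq_zero {𝕜 A : Type*} [Field 𝕜] [Ring A] [Algebra 𝕜 A]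
    [Nontrivial A] {a : A} {p : 𝕜[X]} (hp : aeval a p = 0) {μ : 𝕜} (hμ : μ ∈ spectrum 𝕜 a) :
    p.eval μ = 0 := by
  simpa [hp] using spectrum.subset_polynomial_aeval a p ⟨μ, hμ, rfl⟩

theorem Matrix.mem_spectrum_of_mulVec_eq_smul {n R : Type*} [Fintype n] [DecidableEq n]
    [CommRing R] {A : Matrix n n R} {v : n → R} {μ : R} (hv : v ≠ 0) (hAv : A *ᵥ v = μ • v) :
    μ ∈ spectrum R A := by
  rw [← Matrix.spectrum_toLin']
  refine (Module.End.hasEigenvalue_of_hasEigenvector (x := v) ?_).mem_spectrum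
  exact Module.End.hasEigenvector_iff.mpr
    ⟨Module.End.mem_eigenspace_iff.mpr (by simpa using hAv), hv⟩

namespace Real

theorem goldenRatio_pow_three : φ ^ 3 = 2 * φ + 1 := by
  linear_combination (φ + 1) * goldenRatio_sq

theorem goldenConj_pow_three : ψ ^ 3 = 2 * ψ + 1 := by
  linear_combination (ψ + 1) * goldenConj_sq

theorem goldenRatio_pow_three_eq : φ ^ 3 = 2 + √5 := by
  rw [goldenRatio_pow_three, goldenRatio]; ring

theorem goldenRatio_pow_three_add_goldenConj_pow_three : φ ^ 3 + ψ ^ 3 = 4 := by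
  linear_combination goldenRatio_pow_three + goldenConj_pow_three + 2 * goldenRatio_add_goldenConj

theorem goldenRatio_pow_three_mul_goldenConj_pow_three : φ ^ 3 * ψ ^ 3 = -1 := by
  rw [← mul_pow, goldenRatio_mul_goldenConj]; norm_num

end Real

theorem Complex.sq_sub_four_mul_sub_one (z : ℂ) :
    z ^ 2 - 4 * z - 1 = (z - (φ ^ 3 : ℝ)) * (z - (ψ ^ 3 : ℝ)) := by
  have hsum : ((φ ^ 3 : ℝ) : ℂ) + (ψ ^ 3 : ℝ) = 4 := by
    exact_mod_cast goldenRatio_pow_three_add_goldenConj_pow_three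
  have hprod : ((φ ^ 3 : ℝ) : ℂ) * (ψ ^ 3 : ℝ) = -1 := by
    exact_mod_cast goldenRatio_pow_three_mul_goldenConj_pow_three
  linear_combination z * hsum - hprod

theorem Complex.norm_le_goldenRatio_pow_three {z : ℂ}
    (hz : z ^ 2 * (z - 1) ^ 2 * (z ^ 2 - 4 * z - 1) = 0) : ‖z‖ ≤ φ ^ 3 := by
  have hone : 1 ≤ φ ^ 3 := one_le_pow₀ one_lt_goldenRatio.le
  have hψ : |ψ| ≤ 1 := abs_le.2 ⟨neg_one_lt_goldenConj.le, goldenConj_neg.le.trans zero_le_one⟩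
  rw [sq_sub_four_mul_sub_one] at hz
  simp only [mul_eq_zero, pow_eq_zero_iff two_ne_zero, sub_eq_zero] at hz
  rcases hz with (rfl | rfl) | rfl | rfl
  · rw [norm_zero]; positivity
  · simpa using hone
  · rw [Complex.norm_real, Real.norm_of_nonneg (by positivity)]
  · rw [Complex.norm_real, norm_pow, Real.norm_eq_abs]
    exact (pow_le_one₀ (abs_nonneg _) hψ).trans hone

def triangleCycleMatrix (R : Type*) [Ring R] : Matrix (Fin 6) (Fin 6) R :=
  !![3, 1, 1, -3, -2, 0;
     2, 2, 1, -3, -2, 0;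
     2, 1, 2, -3, -2, 0;
     0, 0, 0,  0,  0, 0;
     1, 0, 1, -1, -1, 0;
     1, 1, 1, -2, -1, 0]

theorem triangleCycleMatrix_map {R S : Type*} [Ring R] [Ring S] (f : R →+* S) :
    (triangleCycleMatrix R).map f = triangleCycleMatrix S := by
  ext i j
  fin_cases i <;> fin_cases j <;> simp [triangleCycleMatrix, map_ofNat f]

theorem aeval_triangleCycleMatrix (R : Type*) [CommRing R] :
    aeval (triangleCycleMatrix R) (X ^ 2 * (X - 1) ^ 2 * (X ^ 2 - 4 * X - 1) : R[X]) = 0 := by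
  have hℤ : let A := triangleCycleMatrix ℤ; A ^ 2 * (A - 1) ^ 2 * (A ^ 2 - 4 * A - 1) = 0 := by
    decide
  have hR := congrArg (Int.castRingHom R).mapMatrix hℤ
  simp only [map_mul, map_sub, map_pow, map_one, map_ofNat, map_zero, RingHom.mapMatrix_apply,
    triangleCycleMatrix_map] at hR
  simpa [map_ofNat] using hR

theorem triangleCycleMatrix_mulVec_goldenRatio :
    triangleCycleMatrix ℝ *ᵥ ![φ, φ, φ, 0, φ - 1, 1] = φ ^ 3 • ![φ, φ, φ, 0, φ - 1, 1] := by
  rw [goldenRatio_pow_three]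
  ext i
  fin_cases i <;> simp [triangleCycleMatrix, mulVec, dotProduct, Fin.sum_univ_succ] <;>
    linarith [goldenRatio_sq]

theorem goldenRatio_pow_three_mem_spectrum_triangleCycleMatrix :
    φ ^ 3 ∈ spectrum ℝ (triangleCycleMatrix ℝ) :=
  Matrix.mem_spectrum_of_mulVec_eq_smul (fun h => by simpa using congrFun h 5)
    triangleCycleMatrix_mulVec_goldenRatio

/-- `2 + √5 = ((1 + √5)/2)³` is an eigenvalue of the real matrix `P = P₂·P₁·P₀`, and every
complex eigenvalue `μ` of `P` satisfies `|μ| ≤ 2 + √5`. -/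
theorem stmt_12 (P : Matrix (Fin 6) (Fin 6) ℝ)
    (hP : P = !![3, 1, 1, -3, -2, 0;
                 2, 2, 1, -3, -2, 0;
                 2, 1, 2, -3, -2, 0;
                 0, 0, 0,  0,  0, 0;
                 1, 0, 1, -1, -1, 0;
                 1, 1, 1, -2, -1, 0]) :
    2 + Real.sqrt 5 = ((1 + Real.sqrt 5) / 2) ^ 3 ∧
      (2 + Real.sqrt 5) ∈ spectrum ℝ P ∧
      ∀ μ : ℂ, μ ∈ spectrum ℂ (P.map ((↑) : ℝ → ℂ)) →
        ‖μ‖ ≤ 2 + Real.sqrt 5 := by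
  change P = triangleCycleMatrix ℝ at hP
  subst hP
  rw [← goldenRatio_pow_three_eq]
  refine ⟨rfl, goldenRatio_pow_three_mem_spectrum_triangleCycleMatrix, fun μ hμ => ?_⟩
  rw [show (triangleCycleMatrix ℝ).map ((↑) : ℝ → ℂ) = triangleCycleMatrix ℂ from
    triangleCycleMatrix_map Complex.ofRealHom] at hμ
  apply Complex.norm_le_goldenRatio_pow_three
  simpa using spectrum.eval_eq_zero_of_aeval_eq_zero (aeval_triangleCycleMatrix ℂ) hμ
end

section
/- Let q ∈ ℂ[X₁, …, X₅] be homogeneous of degree 2 and c ∈ ℂ[X₁, …, X₅] homogeneous of degree 3 (both not involving X₀), and let F = X₁·X₀² + X₀·q + c ∈ ℂ[X₀, …, X₅]. Define the six polynomials σ₀ = X₀X₁ + q, σ₁ = −X₁², σ₂ = −X₁X₂, σ₃ = −X₁X₃, σ₄ = −X₁X₄, σ₅ = −X₁X₅. Then substituting (σ₀, …, σ₅) for (X₀, …, X₅) in F yields the polynomial identity F(σ₀, …, σ₅) = −X₁³ · F. -/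
/-!
Away from `X₀` the reflection is the rescaling `Xᵢ ↦ -X₁ Xᵢ`, so the forms `q` and `c`, which do
not involve `X₀`, pick up the factors `(-X₁)²` and `(-X₁)³`; what remains is a ring identity.
-/

namespace MvPolynomial

variable {σ R S : Type*} [CommSemiring R] [CommSemiring S] [Algebra R S]

theorem IsHomogeneous.aeval_mul_left {p : MvPolynomial σ R} {n : ℕ} (hp : p.IsHomogeneous n)
    (r : S) (x : σ → S) :
    MvPolynomial.aeval (fun i => r * x i) p = r ^ n * MvPolynomial.aeval x p := by
  conv_lhs => rw [p.as_sum]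
  conv_rhs => rw [p.as_sum]
  simp only [map_sum, aeval_monomial, Finset.mul_sum]
  refine Finset.sum_congr rfl fun d hd => ?_
  have hdeg : ∑ i ∈ d.support, d i = n := by
    simpa [Finsupp.weight, Finsupp.linearCombination, Finsupp.sum] using
      hp (mem_support_iff.mp hd)
  rw [Finsupp.prod, Finsupp.prod]
  simp only [mul_pow, Finset.prod_mul_distrib, Finset.prod_pow_eq_pow_sum, hdeg]
  ring

theorem IsHomogeneous.aeval_eq_pow_mul_of_forall_mem_vars {p : MvPolynomial σ R} {n : ℕ}
    (hp : p.IsHomogeneous n) {f : σ → MvPolynomial σ R} {r : MvPolynomial σ R}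
    (hf : ∀ i ∈ p.vars, f i = r * X i) :
    MvPolynomial.aeval f p = r ^ n * p :=
  calc MvPolynomial.aeval f p = MvPolynomial.aeval (fun i => r * X i) p :=
        eval₂Hom_congr' rfl (fun i hi _ => hf i hi) rfl
    _ = r ^ n * p := by rw [hp.aeval_mul_left, aeval_X_left_apply]

end MvPolynomial

open MvPolynomial

/-- The reflection `σ_p` of a cubic fourfold `{F = 0}` with
`F = X₁X₀² + X₀q + c` (where `q`, `c` are homogeneous of degrees 2 and 3 in `X₁,…,X₅`)
satisfies the polynomial identity `F(σ₀,…,σ₅) = −X₁³·F`, i.e. `σ_p` maps `X` to itself. -/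
theorem stmt_15 (q c : MvPolynomial (Fin 6) ℂ)
    (hq : q.IsHomogeneous 2) (hc : c.IsHomogeneous 3)
    (hqv : (0 : Fin 6) ∉ q.vars) (hcv : (0 : Fin 6) ∉ c.vars)
    (F : MvPolynomial (Fin 6) ℂ) (hF : F = X 1 * X 0 ^ 2 + X 0 * q + c)
    (σ : Fin 6 → MvPolynomial (Fin 6) ℂ)
    (hσ : σ = ![X 0 * X 1 + q, -(X 1 ^ 2), -(X 1 * X 2), -(X 1 * X 3),
                -(X 1 * X 4), -(X 1 * X 5)]) :
    aeval σ F = -(X 1) ^ 3 * F := by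
  have hσ_ne_zero : ∀ i ≠ 0, σ i = -X 1 * X i := by
    subst hσ
    intro i hi
    fin_cases i <;> simp at hi ⊢
    ring
  have h0 : σ 0 = X 0 * X 1 + q := by rw [hσ]; rfl
  have h1 : σ 1 = -X 1 * X 1 := hσ_ne_zero 1 (by decide)
  have hq2 : aeval σ q = (-X 1) ^ 2 * q :=
    hq.aeval_eq_pow_mul_of_forall_mem_vars fun i hi =>
      hσ_ne_zero i (ne_of_mem_of_not_mem hi hqv)
  have hc3 : aeval σ c = (-X 1) ^ 3 * c :=
    hc.aeval_eq_pow_mul_of_forall_mem_vars fun i hi =>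
      hσ_ne_zero i (ne_of_mem_of_not_mem hi hcv)
  rw [hF]
  simp only [map_add, map_mul, map_pow, aeval_X, hq2, hc3, h0, h1]
  ring
end

section
/- Let E be an abelian group and N ≥ 2 an even integer. Let p₁, …, p_N ∈ E be ℤ-linearly independent, i.e. the only integers c₁, …, c_N with c₁p₁ + ⋯ + c_Np_N = 0 are c₁ = ⋯ = c_N = 0. For x ∈ E define σ_x : E → E by σ_x(y) = −x − y. Define the sequence y₀ = p₁ and y_k = σ_{p_{1 + (k mod N)}}(y_{k−1}) for k ≥ 1 (so the maps σ_{p₂}, σ_{p₃}, …, σ_{p_N}, σ_{p₁}, σ_{p₂}, … are applied cyclically in this order). Then y_k ≠ p₁ for all k ≥ 1. -/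
/-!
Multiplying by `(-1)^k` telescopes the recursion: `(-1)^k y_k = p 0 + ∑_{j<k} (-1)^j p ((j+1) mod N)`.
If `y_k = p 0`, linear independence lets us compare coefficients of `p 1`: on the left it is `0`,
on the right it is the sum of `(-1)^j` over the `j < k` with `j + 1 ≡ 1 mod N`. Since `N` is even,
all these `j` are even, and `j = 0` is one of them, so this coefficient is positive.
-/

open Finset

theorem neg_one_pow_smul_eq_add_sum {G : Type*} [AddCommGroup G] (x y : ℕ → G)
    (hy : ∀ k, y (k + 1) = -x (k + 1) - y k) (k : ℕ) :
    (-1 : ℤ) ^ k • y k = y 0 + ∑ j ∈ range k, (-1 : ℤ) ^ j • x (j + 1) := by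
  induction k with
  | zero => simp
  | succ k ih =>
    rw [sum_range_succ, ← add_assoc, ← ih, hy, pow_succ]
    module

theorem sum_range_ite_succ_mod_eq_one_neg_one_pow_pos {N : ℕ} (hN : Even N) {k : ℕ}
    (hk : 1 ≤ k) : 0 < ∑ j ∈ range k, if 1 = (j + 1) % N then (-1 : ℤ) ^ j else 0 := by
  have hnonneg : ∀ j ∈ range k, 0 ≤ if 1 = (j + 1) % N then (-1 : ℤ) ^ j else 0 := by
    intro j _
    split_ifs with h
    · have hodd : (j + 1) % 2 = 1 := by rw [← Nat.mod_mod_of_dvd _ hN.two_dvd, ← h]; rfl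
      rw [Even.neg_one_pow (by rw [Nat.even_iff]; omega)]
      exact zero_le_one
    · exact le_rfl
  have hN1 : 1 % N = 1 := Nat.one_mod_eq_one.2 fun h => by simp [h] at hN
  calc (0 : ℤ) < 1 := zero_lt_one
    _ = if 1 = (0 + 1) % N then (-1 : ℤ) ^ 0 else 0 := by simp [hN1]
    _ ≤ _ := single_le_sum hnonneg (mem_range.2 hk)

/-- On an elliptic curve, for `N ≥ 2` even and `ℤ`-linearly independent points `p₁,…,p_N`,
the orbit of `p₁` under the cyclic composition of the reflections `σ_x(y) = −x−y`
(applied in the order `σ_{p₂}, σ_{p₃}, …, σ_{p_N}, σ_{p₁}, σ_{p₂}, …`) never returns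
to `p₁`. -/
theorem stmt_17 (E : Type*) [AddCommGroup E] (N : ℕ) (hN : 2 ≤ N) (hNeven : Even N)
    (p : Fin N → E)
    (hindep : ∀ c : Fin N → ℤ, ∑ i, c i • p i = 0 → ∀ i, c i = 0)
    (y : ℕ → E) (hy0 : y 0 = p ⟨0, by omega⟩)
    (hy : ∀ k : ℕ, y (k + 1) = -p ⟨(k + 1) % N, Nat.mod_lt _ (by omega)⟩ - y k) :
    ∀ k : ℕ, 1 ≤ k → y k ≠ p ⟨0, by omega⟩ := by
  intro k hk hyk
  have hclosed := neg_one_pow_smul_eq_add_sum (fun j => p ⟨j % N, Nat.mod_lt _ (by omega)⟩) y hy k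
  rw [hyk, ← hy0] at hclosed
  set d : Fin N → ℤ :=
    ∑ j ∈ range k, (-1 : ℤ) ^ j • Pi.single ⟨(j + 1) % N, Nat.mod_lt _ (by omega)⟩ 1
  have hcoeff : (-1 : ℤ) ^ k • Pi.single ⟨0, by omega⟩ 1 = Pi.single ⟨0, by omega⟩ 1 + d := by
    apply (Fintype.linearIndependent_iff.2 hindep).fintypeLinearCombination_injective
    simp only [d, map_add, map_sum, map_zsmul, Fintype.linearCombination_apply_single, one_smul]
    rw [← hy0, hclosed]
  have hcoeff₁ : (0 : ℤ) = ∑ j ∈ range k, if 1 = (j + 1) % N then (-1 : ℤ) ^ j else 0 := by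
    simpa [d, Pi.single_apply, Fin.ext_iff] using congrFun hcoeff ⟨1, by omega⟩
  exact (sum_range_ite_succ_mod_eq_one_neg_one_pow_pos hNeven hk).ne hcoeff₁
end

section
/- Let E be an abelian group and N ≥ 3 an odd integer. Let p₁, …, p_N ∈ E be ℤ-linearly independent, i.e. the only integers c₁, …, c_N with c₁p₁ + ⋯ + c_Np_N = 0 are c₁ = ⋯ = c_N = 0. For x ∈ E define σ_x : E → E by σ_x(y) = −x − y. Define the sequence y₀ = p₁ and y_k = σ_{p_{1 + (k mod N)}}(y_{k−1}) for k ≥ 1 (so the maps σ_{p₂}, σ_{p₃}, …, σ_{p_N}, σ_{p₁}, σ_{p₂}, … are applied cyclically in this order). Then y_{2N} = p₁ (i.e. p₁ is mapped back to itself after applying σ_{p₁}∘(σ_{p_N}∘⋯∘σ_{p₁})∘(σ_{p_N}∘⋯∘σ_{p₂})), and for every k with 1 ≤ k ≤ 2N − 1, the element y_k is not equal to any of p₁, …, p_N. -/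
/-!
Write `y_k = σ_{a_k} y_{k-1}` with `σ_x y = -x - y`. Then `(-1)^k y_k = y_0 + ∑_{j<k} (-1)^j a_{j+1}`.
If `a` has odd period `N`, the two halves of the sum over `j < 2N` cancel, so `y_{2N} = y_0`.
By linear independence it suffices to show `y_k ≠ p_i` when the `p_i` are the standard basis
of `ℤ^N`. There the closed form gives the coordinate `-1` at index `k` when `1 ≤ k < N`, and
`±2` at index `0` when `N ≤ k < 2N`, which rules out a basis vector.
-/

open Finset

section ReflectionOrbit

variable {G H : Type*} [AddCommGroup G] [AddCommGroup H]

def reflectionOrbit (x₀ : G) (a : ℕ → G) : ℕ → G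
  | 0 => x₀
  | k + 1 => -a (k + 1) - reflectionOrbit x₀ a k

theorem eq_reflectionOrbit {x₀ : G} {a y : ℕ → G} (h0 : y 0 = x₀)
    (hy : ∀ k, y (k + 1) = -a (k + 1) - y k) : y = reflectionOrbit x₀ a := by
  funext k
  induction k with
  | zero => exact h0
  | succ k ih => rw [hy, ih, reflectionOrbit]

theorem map_reflectionOrbit (f : G →+ H) (x₀ : G) (a : ℕ → G) (k : ℕ) :
    f (reflectionOrbit x₀ a k) = reflectionOrbit (f x₀) (f ∘ a) k := by
  induction k with
  | zero => rfl
  | succ k ih => rw [reflectionOrbit, reflectionOrbit, map_sub, map_neg, ih, Function.comp_apply]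

theorem neg_one_pow_smul_reflectionOrbit (x₀ : G) (a : ℕ → G) (k : ℕ) :
    (-1 : ℤ) ^ k • reflectionOrbit x₀ a k = x₀ + ∑ j ∈ range k, (-1 : ℤ) ^ j • a (j + 1) := by
  induction k with
  | zero => simp [reflectionOrbit]
  | succ k ih =>
    rw [sum_range_succ, ← add_assoc, ← ih, reflectionOrbit, pow_succ, mul_smul]
    module

theorem reflectionOrbit_two_mul {N : ℕ} (hN : Odd N) (x₀ : G) {a : ℕ → G}
    (ha : ∀ k, a (k + N) = a k) : reflectionOrbit x₀ a (2 * N) = x₀ := by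
  have h := neg_one_pow_smul_reflectionOrbit x₀ a (2 * N)
  have hshift : ∑ j ∈ range N, (-1 : ℤ) ^ (N + j) • a (N + j + 1)
      = -∑ j ∈ range N, (-1 : ℤ) ^ j • a (j + 1) := by
    rw [← sum_neg_distrib]
    refine sum_congr rfl fun j _ => ?_
    rw [pow_add, hN.neg_one_pow, show N + j + 1 = j + 1 + N by ring, ha, neg_one_mul, neg_smul]
  rw [(even_two_mul N).neg_one_pow, one_smul, two_mul, sum_range_add, hshift, add_neg_cancel,
    add_zero] at h
  rwa [two_mul]

end ReflectionOrbit

section FreeReflectionOrbit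

variable (N : ℕ) [NeZero N]

def freeReflectionOrbit : ℕ → Fin N → ℤ :=
  reflectionOrbit (Pi.single 0 1) fun k => Pi.single (Fin.ofNat N k) 1

theorem freeReflectionOrbit_apply (k : ℕ) (r : Fin N) :
    (-1) ^ k * freeReflectionOrbit N k r
      = (if r = 0 then 1 else 0) + ∑ j ∈ range k, if (j + 1) % N = r then (-1) ^ j else 0 := by
  have h := congrFun (neg_one_pow_smul_reflectionOrbit (Pi.single 0 1 : Fin N → ℤ)
    (fun k => Pi.single (Fin.ofNat N k) 1) k) r
  simp only [Pi.smul_apply, smul_eq_mul, Pi.add_apply, Finset.sum_apply, Pi.single_apply] at h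
  rw [freeReflectionOrbit, h]
  congr 1
  refine sum_congr rfl fun j _ => ?_
  simp [Fin.ext_iff, eq_comm]

theorem freeReflectionOrbit_apply_self {m : ℕ} (hm : m + 1 < N) :
    freeReflectionOrbit N (m + 1) ⟨m + 1, hm⟩ = -1 := by
  have h := freeReflectionOrbit_apply N (m + 1) ⟨m + 1, hm⟩
  have hsum : ∑ j ∈ range m, (if (j + 1) % N = m + 1 then (-1 : ℤ) ^ j else 0) = 0 :=
    sum_eq_zero fun j hj => by
      rw [mem_range] at hj
      rw [Nat.mod_eq_of_lt (by omega), if_neg (by omega)]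
  rw [if_neg (by simp [Fin.ext_iff]), sum_range_succ, hsum, if_pos (Nat.mod_eq_of_lt hm)] at h
  rcases neg_one_pow_eq_or ℤ m with hm | hm <;> rw [pow_succ, hm] at h <;> linarith

theorem freeReflectionOrbit_apply_zero (hN : Odd N) {k : ℕ} (hk₁ : N ≤ k) (hk₂ : k < 2 * N) :
    (-1) ^ k * freeReflectionOrbit N k 0 = 2 := by
  have hN₀ : 0 < N := Nat.pos_of_neZero N
  have hwrap : ∀ j ∈ range k, j ≠ N - 1 → (j + 1) % N ≠ 0 := by
    intro j hj hjN
    rw [mem_range] at hj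
    rcases lt_or_ge (j + 1) N with hlt | hge
    · rw [Nat.mod_eq_of_lt hlt]; omega
    · rw [Nat.mod_eq_sub_mod hge, Nat.mod_eq_of_lt (by omega)]; omega
  rw [freeReflectionOrbit_apply, if_pos rfl, sum_eq_single_of_mem (N - 1) (by simp; omega)
    fun j hj hjN => if_neg (by simpa using hwrap j hj hjN), Nat.sub_add_cancel hN₀, Nat.mod_self,
    if_pos (by simp), (Nat.Odd.sub_odd hN odd_one).neg_one_pow]
  norm_num

theorem freeReflectionOrbit_ne_single (hN : Odd N) {k : ℕ} (hk₁ : 1 ≤ k) (hk₂ : k < 2 * N)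
    (i : Fin N) : freeReflectionOrbit N k ≠ Pi.single i 1 := by
  intro h
  rcases lt_or_ge k N with hkN | hkN
  · obtain ⟨m, rfl⟩ : ∃ m, k = m + 1 := ⟨k - 1, by omega⟩
    have := freeReflectionOrbit_apply_self N hkN
    rw [h, Pi.single_apply] at this
    split_ifs at this
  · have := freeReflectionOrbit_apply_zero N hN hkN hk₂
    rw [h, Pi.single_apply] at this
    rcases neg_one_pow_eq_or ℤ k with hk | hk <;> split_ifs at this <;> simp [hk] at this

end FreeReflectionOrbit

/-- On an elliptic curve, for `N ≥ 3` odd and `ℤ`-linearly independent points `p₁,…,p_N`,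
the orbit of `p₁` under the cyclic composition of the reflections `σ_x(y) = −x−y`
(applied in the order `σ_{p₂}, σ_{p₃}, …, σ_{p_N}, σ_{p₁}, σ_{p₂}, …`) returns to `p₁`
exactly after `2N` steps, and no intermediate element of the orbit equals any of the `pᵢ`. -/
theorem stmt_18 (E : Type*) [AddCommGroup E] (N : ℕ) (hN : 3 ≤ N) (hNodd : Odd N)
    (p : Fin N → E)
    (hindep : ∀ c : Fin N → ℤ, ∑ i, c i • p i = 0 → ∀ i, c i = 0)
    (y : ℕ → E) (hy0 : y 0 = p ⟨0, by omega⟩)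
    (hy : ∀ k : ℕ, y (k + 1) = -p ⟨(k + 1) % N, Nat.mod_lt _ (by omega)⟩ - y k) :
    y (2 * N) = p ⟨0, by omega⟩ ∧
      ∀ k : ℕ, 1 ≤ k → k ≤ 2 * N - 1 → ∀ i : Fin N, y k ≠ p i := by
  have : NeZero N := ⟨by omega⟩
  have horbit : y = reflectionOrbit (p 0) fun k => p (Fin.ofNat N k) := eq_reflectionOrbit hy0 hy
  have hfree : y = Fintype.linearCombination ℤ p ∘ freeReflectionOrbit N := by
    funext k
    rw [horbit, Function.comp_apply, freeReflectionOrbit, ← LinearMap.toAddMonoidHom_coe,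
      map_reflectionOrbit]
    congr 1 <;> simp [Function.comp_def]
  refine ⟨?_, fun k hk₁ hk₂ i hyk => ?_⟩
  · rw [horbit]
    exact reflectionOrbit_two_mul hNodd _ fun k => by simp [Fin.ofNat]
  · refine freeReflectionOrbit_ne_single N hNodd hk₁ (by omega) i
      ((Fintype.linearIndependent_iff.2 hindep).fintypeLinearCombination_injective ?_)
    rw [← Function.comp_apply (f := Fintype.linearCombination ℤ p), ← hfree, hyk,
      Fintype.linearCombination_apply_single, one_smul]
end
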